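/- Let μ ≥ 0, δ ∈ (0,1), and let N ≥ 0 be a real number satisfying N ≥ μ − √(2·μ·log(1/δ)). Then max{0, N − √(2·N·log(1/δ))} ≥ max{0, μ − 2·√(2·μ·log(1/δ))}; that is, U₋(N,δ) ≥ Ū₋(μ,δ). -/

import Mathlib

open Real

/- Write `s = √(2μL)`. Once `μ > 2s` we have `s² = 2μL > 4sL`, so `L ≤ s`; then for
`N = μ - s + t` with `t ≥ 0` one checks `2NL ≤ (s + t)²`, i.e. `√(2NL) ≤ N - μ + 2s`. -/
theorem sub_two_sqrt_le_sub_sqrt {L μ N : ℝ} (hL : 0 ≤ L) (hμ : 2 * √(2 * μ * L) < μ)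
    (hN : μ - √(2 * μ * L) ≤ N) : μ - 2 * √(2 * μ * L) ≤ N - √(2 * N * L) := by
  set s := √(2 * μ * L)
  have hs : 0 ≤ s := sqrt_nonneg _
  have hs_sq : s ^ 2 = 2 * μ * L := sq_sqrt (by nlinarith)
  have hLs : L ≤ s := by nlinarith
  have hsqrt : √(2 * N * L) ≤ N - μ + 2 * s :=
    sqrt_le_iff.mpr ⟨by linarith, by nlinarith [mul_nonneg (sub_nonneg.mpr hLs) hL]⟩
  linarith

theorem Uminus_ge_UbarMinus (μ δ N : ℝ) (hδ : δ ∈ Set.Ioo (0 : ℝ) 1)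
    (h : μ - Real.sqrt (2 * μ * Real.log (1 / δ)) ≤ N) :
    max 0 (μ - 2 * Real.sqrt (2 * μ * Real.log (1 / δ))) ≤
      max 0 (N - Real.sqrt (2 * N * Real.log (1 / δ))) := by
  have hL : 0 ≤ Real.log (1 / δ) := log_nonneg (one_le_one_div hδ.1 hδ.2.le)
  refine max_le (le_max_left _ _) ?_
  rcases le_or_gt (μ - 2 * √(2 * μ * Real.log (1 / δ))) 0 with hle | hlt
  · exact hle.trans (le_max_left _ _)
  · exact (sub_two_sqrt_le_sub_sqrt hL (sub_pos.mp hlt) h).trans (le_max_right _ _)
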